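/- Let F : M_{m,n} → (−∞,+∞] be an orthogonally invariant matrix function with F = f ∘ σ for an absolutely symmetric function f : ℝⁿ → (−∞,+∞]. Then for every x ∈ ℝⁿ, dist(x, dom f) = dist(diag(x), dom F), where diag(x) is the m×n matrix with x on its diagonal and zeros elsewhere. -/

import Mathlib

open Filter Topology Matrix

noncomputable section

abbrev Mat (m n : ℕ) := Matrix (Fin m) (Fin n) ℝ

namespace Paper

/-- Frobenius (trace) inner product on real matrices. -/
def finner {m n : ℕ} (X Y : Mat m n) : ℝ := ∑ i, ∑ j, X i j * Y i j

/-- Frobenius norm. -/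
def fnorm {m n : ℕ} (X : Mat m n) : ℝ := Real.sqrt (finner X X)

/-- Euclidean inner product on `ℝⁿ`. -/
def vinner {n : ℕ} (x y : Fin n → ℝ) : ℝ := ∑ i, x i * y i

/-- Euclidean norm on `ℝⁿ`. -/
def vnorm {n : ℕ} (x : Fin n → ℝ) : ℝ := Real.sqrt (vinner x x)

/-- Eigenvalues of a real symmetric matrix, arranged in nonincreasing order. -/
def eigs {k : ℕ} (A : Matrix (Fin k) (Fin k) ℝ) (hA : A.IsHermitian) : Fin k → ℝ :=
  fun i => hA.eigenvalues (Tuple.sort (fun j => -(hA.eigenvalues j)) i)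

/-- Singular values of a real `m × n` matrix, arranged in nonincreasing order. -/
def svals {m n : ℕ} (X : Mat m n) : Fin n → ℝ :=
  fun i => Real.sqrt (eigs _ (show (Xᵀ * X).IsHermitian by
    simpa using Matrix.isHermitian_conjTranspose_mul_self X) i)

/-- The `m × n` matrix with `x` on the diagonal and zeros elsewhere. -/
def mdiag {m n : ℕ} (x : Fin n → ℝ) : Mat m n :=
  fun i j => if (i : ℕ) = (j : ℕ) then x j else 0

/-- The symmetric block matrix `B(X) = [[0, X], [Xᵀ, 0]]`, reindexed over `Fin (m+n)`. -/
def bmat {m n : ℕ} (X : Mat m n) : Matrix (Fin (m + n)) (Fin (m + n)) ℝ :=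
  Matrix.reindex finSumFinEquiv finSumFinEquiv (Matrix.fromBlocks 0 X Xᵀ 0)

lemma bmat_isHermitian {m n : ℕ} (X : Mat m n) : (bmat X).IsHermitian := by
  rw [Matrix.IsHermitian]
  ext i j
  simp only [bmat, Matrix.conjTranspose_apply, Matrix.reindex_apply, Matrix.submatrix_apply,
    star_trivial]
  rcases hi : finSumFinEquiv.symm i with a | a <;> rcases hj : finSumFinEquiv.symm j with b | b <;>
    simp [Matrix.fromBlocks, Matrix.transpose_apply]

/-- Eigenvalues of `B(X)` in nonincreasing order. -/
def beigs {m n : ℕ} (X : Mat m n) : Fin (m + n) → ℝ :=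
  eigs (bmat X) (bmat_isHermitian X)

/-- `Q` is a signed permutation matrix. -/
def IsSignedPerm {n : ℕ} (Q : Matrix (Fin n) (Fin n) ℝ) : Prop :=
  ∃ (e : Equiv.Perm (Fin n)) (s : Fin n → ℝ), (∀ i, s i = 1 ∨ s i = -1) ∧
    ∀ i j, Q i j = if j = e i then s i else 0

/-- A set of vectors invariant under all signed permutations. -/
def AbsSymSet {n : ℕ} (K : Set (Fin n → ℝ)) : Prop :=
  ∀ Q, IsSignedPerm Q → ∀ x ∈ K, Q.mulVec x ∈ K

/-- An extended-real-valued absolutely symmetric function. -/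
def AbsSymFun {n : ℕ} (f : (Fin n → ℝ) → EReal) : Prop :=
  ∀ Q, IsSignedPerm Q → ∀ x, f (Q.mulVec x) = f x

/-- Euclidean distance from a point to a set in `ℝⁿ`. -/
def vdist {n : ℕ} (x : Fin n → ℝ) (K : Set (Fin n → ℝ)) : ℝ :=
  sInf ((fun y => vnorm (x - y)) '' K)

/-- Frobenius distance from a matrix to a set of matrices. -/
def mdist {m n : ℕ} (X : Mat m n) (Γ : Set (Mat m n)) : ℝ :=
  sInf ((fun Y => fnorm (X - Y)) '' Γ)

section Variational

variable {E : Type*} [AddCommGroup E] [Module ℝ E] [TopologicalSpace E]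

/-- The subderivative `dg(x)(w) = liminf_{t↓0, w'→w} (g(x+tw') - g(x))/t`. -/
def subderiv (g : E → EReal) (x w : E) : EReal :=
  liminf (fun p : ℝ × E => ((p.1⁻¹ : ℝ) : EReal) * (g (x + p.1 • p.2) - g x))
    ((𝓝[>] (0 : ℝ)) ×ˢ 𝓝 w)

/-- The second-order difference quotient `Δ²_τ g(x | v)(w)`. -/
def secondQuot (ip : E → E → ℝ) (g : E → EReal) (x v : E) (τ : ℝ) (w : E) : EReal :=
  ((2 / τ ^ 2 : ℝ) : EReal) * (g (x + τ • w) - g x - ((τ * ip v w : ℝ) : EReal))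

/-- The second subderivative `d²g(x | v)(w)`. -/
def secondSubderiv (ip : E → E → ℝ) (g : E → EReal) (x v w : E) : EReal :=
  liminf (fun p : ℝ × E => secondQuot ip g x v p.1 p.2) ((𝓝[>] (0 : ℝ)) ×ˢ 𝓝 w)

/-- The parabolic difference quotient `Δ²_τ g(x)(w | z)`. -/
def parabQuot (g : E → EReal) (x w : E) (τ : ℝ) (z : E) : EReal :=
  ((2 / τ ^ 2 : ℝ) : EReal) *
    (g (x + τ • w + (τ ^ 2 / 2) • z) - g x - ((τ : ℝ) : EReal) * subderiv g x w)

/-- The parabolic subderivative `d²g(x)(w | z)`. -/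
def parabolicSubderiv (g : E → EReal) (x w z : E) : EReal :=
  liminf (fun p : ℝ × E => parabQuot g x w p.1 p.2) ((𝓝[>] (0 : ℝ)) ×ˢ 𝓝 z)

/-- Parabolic epi-differentiability of `g` at `x` for `w`. -/
def ParabEpiDiffAt (g : E → EReal) (x w : E) : Prop :=
  (∃ z, parabolicSubderiv g x w z < ⊤) ∧
  ∀ z : E, ∀ t : ℕ → ℝ, (∀ k, 0 < t k) → Tendsto t atTop (𝓝 0) →
    ∃ zk : ℕ → E, Tendsto zk atTop (𝓝 z) ∧
      Tendsto (fun k => parabQuot g x w (t k) (zk k)) atTop (𝓝 (parabolicSubderiv g x w z))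

/-- The (contingent) tangent cone to `C` at `x`. -/
def tangentConeOf (C : Set E) (x : E) : Set E :=
  {w | ∃ t : ℕ → ℝ, ∃ w' : ℕ → E, (∀ k, 0 < t k) ∧ Tendsto t atTop (𝓝 0) ∧
    Tendsto w' atTop (𝓝 w) ∧ ∀ k, x + t k • w' k ∈ C}

/-- The second-order tangent set to `C` at `x` for `w`. -/
def tangentCone2Of (C : Set E) (x w : E) : Set E :=
  {u | ∃ t : ℕ → ℝ, ∃ u' : ℕ → E, (∀ k, 0 < t k) ∧ Tendsto t atTop (𝓝 0) ∧
    Tendsto u' atTop (𝓝 u) ∧ ∀ k, x + t k • w + (t k ^ 2 / 2) • u' k ∈ C}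

/-- Parabolic derivability of the set `C` at `x` for `w`. -/
def ParabolicallyDerivable (C : Set E) (x w : E) : Prop :=
  (tangentCone2Of C x w).Nonempty ∧
  ∀ u ∈ tangentCone2Of C x w, ∃ ε > (0 : ℝ), ∃ ξ : ℝ → E,
    (∀ t ∈ Set.Icc (0 : ℝ) ε, ξ t ∈ C) ∧ ξ 0 = x ∧
    Tendsto (fun t : ℝ => t⁻¹ • (ξ t - x)) (𝓝[>] 0) (𝓝 w) ∧
    Tendsto (fun t : ℝ => (2 / t ^ 2) • (ξ t - x - t • w)) (𝓝[>] 0) (𝓝 u)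

/-- The convex subdifferential of `g` at `x` (w.r.t. the pairing `ip`). -/
def convSubdiff (ip : E → E → ℝ) (g : E → EReal) (x : E) : Set E :=
  {v | ∀ y, ((ip v (y - x) : ℝ) : EReal) + g x ≤ g y}

/-- Convexity for extended-real-valued functions. -/
def ConvexEReal (g : E → EReal) : Prop :=
  ∀ x y : E, ∀ t : ℝ, 0 ≤ t → t ≤ 1 →
    g (t • x + (1 - t) • y) ≤ ((t : ℝ) : EReal) * g x + ((1 - t : ℝ) : EReal) * g y

end Variational

/-- Local Lipschitz continuity of `f` relative to its domain (everywhere on the domain). -/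
def LocLipRelDom {n : ℕ} (f : (Fin n → ℝ) → EReal) : Prop :=
  ∀ x, f x ≠ ⊤ → ∃ l ≥ (0 : ℝ), ∃ U ∈ 𝓝 x, ∀ y ∈ U, ∀ z ∈ U, f y ≠ ⊤ → f z ≠ ⊤ →
    |(f y).toReal - (f z).toReal| ≤ l * vnorm (y - z)

/-- The columns of `U` with indices `r, r+1, …, k-1`. -/
def colsFrom {k : ℕ} (r : ℕ) (U : Matrix (Fin k) (Fin k) ℝ) :
    Matrix (Fin k) (Fin (k - r)) ℝ :=
  fun i j => U i ⟨r + (j : ℕ), by have := j.isLt; omega⟩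

/-- The first `r` columns of `U`. -/
def firstCols {k : ℕ} (r : ℕ) (h : r ≤ k) (U : Matrix (Fin k) (Fin k) ℝ) :
    Matrix (Fin k) (Fin r) ℝ :=
  fun i j => U i (Fin.castLE h j)

/-- The submatrix of `M` with rows `a ≤ · < b` and columns `c ≤ · < d`. -/
def subBlock {p q : ℕ} (M : Matrix (Fin p) (Fin q) ℝ) (a b c d : ℕ)
    (h1 : b ≤ p) (h2 : d ≤ q) : Matrix (Fin (b - a)) (Fin (d - c)) ℝ :=
  fun i j => M ⟨a + (i : ℕ), by have := i.isLt; omega⟩ ⟨c + (j : ℕ), by have := j.isLt; omega⟩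

/-- Nuclear norm: the sum of all singular values. -/
def nucNorm {m n : ℕ} (A : Mat m n) : ℝ := ∑ j, svals A j

/-- `Ψₙ(X) = σ_{r+1}(X) + ⋯ + σ_n(X)`, the sum of the `n - r` smallest singular values. -/
def psiN {m n : ℕ} (r : ℕ) (X : Mat m n) : ℝ :=
  ∑ s : Fin n, if r ≤ (s : ℕ) then svals X s else 0

/-- The regular (Fréchet) subdifferential of a real-valued function on matrices. -/
def regSubdiff {m n : ℕ} (g : Mat m n → ℝ) (X : Mat m n) : Set (Mat m n) :=
  {V | ∀ ε > (0 : ℝ), ∀ᶠ Y in 𝓝 X, g X + finner V (Y - X) - ε * fnorm (Y - X) ≤ g Y}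

/-- Two square matrices admit a simultaneous ordered spectral decomposition. -/
def SimSpec {k : ℕ} (A B : Matrix (Fin k) (Fin k) ℝ) : Prop :=
  ∃ (W : Matrix (Fin k) (Fin k) ℝ) (a b : Fin k → ℝ), Wᵀ * W = 1 ∧
    Antitone a ∧ Antitone b ∧
    A = W * Matrix.diagonal a * Wᵀ ∧ B = W * Matrix.diagonal b * Wᵀ

/-- Two rectangular matrices admit a simultaneous ordered singular value decomposition. -/
def SimSVD {p q : ℕ} (A B : Matrix (Fin p) (Fin q) ℝ) : Prop :=
  ∃ (U : Matrix (Fin p) (Fin p) ℝ) (V : Matrix (Fin q) (Fin q) ℝ)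
    (a b : Fin q → ℝ), Uᵀ * U = 1 ∧ Vᵀ * V = 1 ∧
    Antitone a ∧ Antitone b ∧ (∀ j, 0 ≤ a j) ∧ (∀ j, 0 ≤ b j) ∧
    A = U * (mdiag a : Mat p q) * Vᵀ ∧ B = U * (mdiag b : Mat p q) * Vᵀ

end Paper

open Paper

/-! For `y ∈ dom f` the matrix `diag y` lies in `dom F`, since `σ(diag y)` is a signed
permutation of `y`, and `‖diag x - diag y‖ = ‖x - y‖`. Conversely, write `x = P σ(diag x)` with
`P` a signed permutation; for `Y ∈ dom F` the point `P σ(Y)` lies in `dom f`, and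
`‖x - P σ(Y)‖ = ‖σ(diag x) - σ(Y)‖ ≤ ‖diag x - Y‖` by Mirsky's inequality.

Since `‖σ(X)‖ = ‖X‖`, Mirsky's inequality is von Neumann's trace inequality
`⟨X, Y⟩ ≤ ∑ σᵢ(X) σᵢ(Y)`. With thin SVDs `X = U₁ diag σ V₁ᵀ`, `Y = U₂ diag τ V₂ᵀ` one has
`⟨X, Y⟩ = ∑ σᵢ τⱼ Aᵢⱼ Bᵢⱼ` for `A = U₁ᵀU₂`, `B = V₁ᵀV₂`; by Bessel's inequality
`(Aᵢⱼ² + Bᵢⱼ²) / 2` is doubly substochastic, and summation by parts against the nonincreasing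
`σ`, `τ` bounds the sum by `∑ σᵢ τᵢ`. -/

namespace Paper

section Spectral

variable {k : ℕ} {A : Matrix (Fin k) (Fin k) ℝ}

theorem eigs_antitone (hA : A.IsHermitian) : Antitone (eigs A hA) := fun _ _ hij =>
  neg_le_neg_iff.mp (Tuple.monotone_sort (fun j => -hA.eigenvalues j) hij)

open Polynomial in
theorem eigs_eq_of_charpoly_eq (hA : A.IsHermitian) {d : Fin k → ℝ} (hd : Antitone d)
    (h : A.charpoly = ∏ i, (X - C (d i))) : eigs A hA = d := by
  have hroots : Multiset.map hA.eigenvalues Finset.univ.val = Multiset.map d Finset.univ.val := by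
    have hprod (e : Fin k → ℝ) :
        (∏ i, (X - C (e i))).roots = Multiset.map e Finset.univ.val := by
      rw [Finset.prod_eq_multiset_prod, ← roots_multiset_prod_X_sub_C (Multiset.map e _),
        Multiset.map_map]
      rfl
    have hA' : A.charpoly = ∏ i, (X - C (hA.eigenvalues i)) := hA.charpoly_eq
    rw [← hprod, ← hprod, ← hA', h]
  rw [Fin.univ_val_map, Fin.univ_val_map, Multiset.coe_eq_coe] at hroots
  exact List.ofFn_injective <| List.Perm.eq_of_sortedGE (eigs_antitone hA).sortedGE_ofFn
    hd.sortedGE_ofFn ((Equiv.Perm.ofFn_comp_perm _ _).trans hroots)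

theorem exists_orthogonal_eq_mul_diagonal_eigs (hA : A.IsHermitian) :
    ∃ V : Matrix (Fin k) (Fin k) ℝ, Vᵀ * V = 1 ∧ A = V * diagonal (eigs A hA) * Vᵀ := by
  set W : Matrix (Fin k) (Fin k) ℝ := (hA.eigenvectorUnitary : Matrix (Fin k) (Fin k) ℝ)
  set p := Tuple.sort fun j => -hA.eigenvalues j
  have hW : Wᵀ * W = 1 := by
    simpa [W, star_eq_conjTranspose] using Unitary.coe_star_mul_self hA.eigenvectorUnitary
  refine ⟨W.submatrix (Equiv.refl _) p, ?_, ?_⟩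
  · rw [transpose_submatrix, submatrix_mul_equiv, hW, submatrix_one_equiv]
  · have hd : diagonal (eigs A hA) = (diagonal hA.eigenvalues).submatrix p p :=
      (submatrix_diagonal_equiv _ _).symm
    rw [hd, transpose_submatrix, submatrix_mul_equiv, submatrix_mul_equiv]
    conv_lhs => rw [hA.spectral_theorem, Unitary.conjStarAlgAut_apply]
    simp [W, star_eq_conjTranspose]

end Spectral

theorem finner_eq_trace {m n : ℕ} (X Y : Mat m n) : finner X Y = (Xᵀ * Y).trace := by
  simp only [finner, trace, diag_apply, mul_apply, transpose_apply]
  exact Finset.sum_comm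

theorem finner_sub_self {m n : ℕ} (X Y : Mat m n) :
    finner (X - Y) (X - Y) = finner X X + finner Y Y - 2 * finner X Y := by
  have hYX : (Yᵀ * X).trace = (Xᵀ * Y).trace := by
    rw [← trace_transpose, transpose_mul, transpose_transpose]
  simp only [finner_eq_trace, transpose_sub, Matrix.sub_mul, Matrix.mul_sub, trace_sub, hYX]
  ring

theorem vinner_sub_self {n : ℕ} (x y : Fin n → ℝ) :
    vinner (x - y) (x - y) = vinner x x + vinner y y - 2 * vinner x y := by
  simp only [vinner, Pi.sub_apply, Finset.mul_sum, ← Finset.sum_add_distrib,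
    ← Finset.sum_sub_distrib]
  exact Finset.sum_congr rfl fun i _ => by ring

section SingularValues

variable {m n : ℕ}

theorem isHermitian_transpose_mul_self (X : Mat m n) : (Xᵀ * X).IsHermitian := by
  simpa using isHermitian_conjTranspose_mul_self X

theorem sq_svals (X : Mat m n) (j : Fin n) :
    svals X j ^ 2 = eigs _ (isHermitian_transpose_mul_self X) j :=
  Real.sq_sqrt ((posSemidef_conjTranspose_mul_self X).eigenvalues_nonneg _)

theorem svals_nonneg (X : Mat m n) (j : Fin n) : 0 ≤ svals X j :=
  Real.sqrt_nonneg _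

theorem svals_antitone (X : Mat m n) : Antitone (svals X) := fun _ _ hij =>
  Real.sqrt_le_sqrt (eigs_antitone _ hij)

theorem sum_sq_svals (X : Mat m n) : ∑ j, svals X j ^ 2 = finner X X := by
  have hG := isHermitian_transpose_mul_self X
  simp only [sq_svals, eigs, finner_eq_trace, hG.trace_eq_sum_eigenvalues]
  exact Equiv.sum_comp _ hG.eigenvalues

theorem mul_diagonal_inv_mul_self {ι κ : Type*} [Fintype ι] [Fintype κ] [DecidableEq κ]
    {Z : Matrix ι κ ℝ} {σ : κ → ℝ} (hZ : Zᵀ * Z = diagonal fun j => σ j ^ 2) :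
    Z * diagonal (fun j => (σ j)⁻¹ * σ j) = Z := by
  ext a j
  rw [mul_diagonal]
  by_cases hσ : σ j = 0
  · have hsum : ∑ b, Z b j * Z b j = 0 := by
      simpa [mul_apply, hσ] using congrFun (congrFun hZ j) j
    have := (Finset.sum_eq_zero_iff_of_nonneg fun b _ => mul_self_nonneg (Z b j)).mp hsum a
      (Finset.mem_univ a)
    rw [mul_self_eq_zero.mp this, zero_mul]
  · rw [inv_mul_cancel₀ hσ, mul_one]

theorem exists_svd (X : Mat m n) :
    ∃ (U : Mat m n) (V : Matrix (Fin n) (Fin n) ℝ) (e : Fin n → ℝ),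
      Uᵀ * U = diagonal e ∧ (∀ j, e j ≤ 1) ∧ Vᵀ * V = 1 ∧
        X = U * diagonal (svals X) * Vᵀ := by
  have hG := isHermitian_transpose_mul_self X
  obtain ⟨V, hV, hXV⟩ := exists_orthogonal_eq_mul_diagonal_eigs hG
  set μ := eigs _ hG
  set σ := svals X
  have hZ : (X * V)ᵀ * (X * V) = diagonal (fun j => σ j ^ 2) :=
    calc (X * V)ᵀ * (X * V) = Vᵀ * (Xᵀ * X) * V := by
          simp only [transpose_mul, Matrix.mul_assoc]
      _ = (Vᵀ * V) * diagonal μ * (Vᵀ * V) := by rw [hXV]; simp only [Matrix.mul_assoc]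
      _ = diagonal (fun j => σ j ^ 2) := by simp only [hV, one_mul, mul_one, σ, sq_svals, μ]
  -- `(σ j)⁻¹ = 0` where `σ j = 0`, so `U` has orthonormal or zero columns.
  refine ⟨X * V * diagonal (fun j => (σ j)⁻¹), V,
    fun j => (σ j)⁻¹ * σ j ^ 2 * (σ j)⁻¹, ?_, fun j => ?_, hV, ?_⟩
  · rw [transpose_mul, diagonal_transpose, Matrix.mul_assoc, ← Matrix.mul_assoc (X * V)ᵀ, hZ,
      diagonal_mul_diagonal, diagonal_mul_diagonal]
    simp only [mul_assoc]
  · by_cases hσ : σ j = 0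
    · simp [hσ]
    · field_simp; rfl
  · rw [Matrix.mul_assoc (X * V), diagonal_mul_diagonal, mul_diagonal_inv_mul_self hZ,
      Matrix.mul_assoc, mul_eq_one_comm.mp hV, Matrix.mul_one]

theorem transpose_mul_mdiag_self (hmn : n ≤ m) (y : Fin n → ℝ) :
    (mdiag y : Mat m n)ᵀ * (mdiag y : Mat m n) =
      diagonal (fun j => y j ^ 2) := by
  ext i j
  rw [mul_apply, Finset.sum_eq_single (Fin.castLE hmn i)]
  · by_cases h : i = j
    · simp [mdiag, h, sq]
    · simp [mdiag, h, Fin.val_ne_of_ne h]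
  · intro a _ ha
    have : (a : ℕ) ≠ i := fun h => ha (Fin.ext h)
    simp [mdiag, this]
  · simp

theorem mdiag_sub (x y : Fin n → ℝ) :
    (mdiag (x - y) : Mat m n) = mdiag x - mdiag y := by
  ext i j
  by_cases h : (i : ℕ) = j <;> simp [mdiag, h]

theorem fnorm_mdiag (hmn : n ≤ m) (z : Fin n → ℝ) :
    fnorm (mdiag z : Mat m n) = vnorm z := by
  rw [fnorm, vnorm, finner_eq_trace, transpose_mul_mdiag_self hmn, trace_diagonal]
  simp only [vinner, sq]

theorem svals_mdiag (hmn : n ≤ m) (y : Fin n → ℝ) :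
    svals (mdiag y : Mat m n) = fun i => |y (Tuple.sort (fun j => -(y j ^ 2)) i)| := by
  set π := Tuple.sort fun j => -(y j ^ 2)
  have hanti : Antitone fun i => y (π i) ^ 2 := fun _ _ hij =>
    neg_le_neg_iff.mp (Tuple.monotone_sort (fun j => -(y j ^ 2)) hij)
  have heigs := eigs_eq_of_charpoly_eq (isHermitian_transpose_mul_self (mdiag y : Mat m n)) hanti
    (by rw [transpose_mul_mdiag_self hmn, charpoly_diagonal]
        exact (Equiv.prod_comp π fun j => Polynomial.X - Polynomial.C (y j ^ 2)).symm)
  ext i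
  rw [svals, heigs, Real.sqrt_sq_eq_abs]

end SingularValues

section SignedPerm

variable {n : ℕ}

theorem mulVec_apply_of_signedPerm {Q : Matrix (Fin n) (Fin n) ℝ} {e : Equiv.Perm (Fin n)}
    {s : Fin n → ℝ} (hQ : ∀ i j, Q i j = if j = e i then s i else 0) (v : Fin n → ℝ)
    (i : Fin n) : (Q *ᵥ v) i = s i * v (e i) := by
  simp [mulVec, dotProduct, hQ]

theorem IsSignedPerm.vnorm_mulVec {Q : Matrix (Fin n) (Fin n) ℝ} (hQ : IsSignedPerm Q)
    (v : Fin n → ℝ) : vnorm (Q *ᵥ v) = vnorm v := by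
  obtain ⟨e, s, hs, hQe⟩ := hQ
  unfold vnorm vinner
  simp_rw [mulVec_apply_of_signedPerm hQe]
  congr 1
  calc ∑ i, s i * v (e i) * (s i * v (e i)) = ∑ i, v (e i) * v (e i) := by
        refine Finset.sum_congr rfl fun i _ => ?_
        rcases hs i with h | h <;> simp [h]
    _ = ∑ i, v i * v i := Equiv.sum_comp e fun i => v i * v i

theorem exists_isSignedPerm_mulVec_svals_mdiag {m : ℕ} (hmn : n ≤ m) (x : Fin n → ℝ) :
    ∃ P, IsSignedPerm P ∧ P *ᵥ svals (mdiag x : Mat m n) = x := by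
  set π := Tuple.sort fun j => -(x j ^ 2)
  set s : Fin n → ℝ := fun i => if x i < 0 then -1 else 1
  set P : Matrix (Fin n) (Fin n) ℝ := of fun i j => if j = π.symm i then s i else 0
  have hP : ∀ i j, P i j = if j = π.symm i then s i else 0 := fun _ _ => rfl
  refine ⟨P, ⟨π.symm, s, fun i => ?_, hP⟩, ?_⟩
  · by_cases h : x i < 0 <;> simp [s, h]
  · ext i
    rw [mulVec_apply_of_signedPerm hP, svals_mdiag hmn]
    change s i * |x (π (π.symm i))| = x i
    rw [Equiv.apply_symm_apply]
    by_cases h : x i < 0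
    · simp [s, h, abs_of_neg h]
    · simp [s, h, abs_of_nonneg (not_lt.mp h)]

end SignedPerm

theorem dotProduct_transpose_mulVec_self_le {ι κ : Type*} [Fintype ι] [Fintype κ]
    [DecidableEq κ] {U : Matrix ι κ ℝ} {e : κ → ℝ}
    (hU : Uᵀ * U = diagonal e) (he : ∀ j, e j ≤ 1) (z : ι → ℝ) :
    (Uᵀ *ᵥ z) ⬝ᵥ (Uᵀ *ᵥ z) ≤ z ⬝ᵥ z := by
  set y := Uᵀ *ᵥ z
  have hyz : y ⬝ᵥ y = z ⬝ᵥ (U *ᵥ y) := by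
    rw [dotProduct_mulVec z, ← mulVec_transpose]
  have hUy : (U *ᵥ y) ⬝ᵥ (U *ᵥ y) ≤ y ⬝ᵥ y := by
    rw [dotProduct_mulVec (U *ᵥ y), ← mulVec_transpose, mulVec_mulVec, hU, dotProduct_comm]
    simp only [dotProduct, mulVec_diagonal]
    exact Finset.sum_le_sum fun j _ => by nlinarith [he j, mul_self_nonneg (y j)]
  have hcs : (z ⬝ᵥ (U *ᵥ y)) ^ 2 ≤ (z ⬝ᵥ z) * ((U *ᵥ y) ⬝ᵥ (U *ᵥ y)) := by
    simpa [dotProduct, sq] using Finset.sum_mul_sq_le_sq_mul_sq Finset.univ z (U *ᵥ y)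
  have hy0 : 0 ≤ y ⬝ᵥ y := Finset.sum_nonneg fun j _ => mul_self_nonneg (y j)
  have hz0 : 0 ≤ z ⬝ᵥ z := Finset.sum_nonneg fun j _ => mul_self_nonneg (z j)
  rw [← hyz] at hcs
  nlinarith

theorem sum_sq_transpose_mul_row_le_one {ι κ μ : Type*} [Fintype ι] [Fintype μ]
    [DecidableEq κ] [DecidableEq μ] {U : Matrix ι κ ℝ} {W : Matrix ι μ ℝ} {e : κ → ℝ}
    {e' : μ → ℝ} (hU : Uᵀ * U = diagonal e) (he : ∀ j, e j ≤ 1)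
    (hW : Wᵀ * W = diagonal e') (he' : ∀ j, e' j ≤ 1) (i : κ) :
    ∑ j, (Uᵀ * W) i j ^ 2 ≤ 1 := by
  have hrow : (fun j => (Uᵀ * W) i j) = Wᵀ *ᵥ fun a => U a i := by
    ext j
    simp only [mul_apply, mulVec, dotProduct, transpose_apply, mul_comm]
  calc ∑ j, (Uᵀ * W) i j ^ 2
        = (Wᵀ *ᵥ fun a => U a i) ⬝ᵥ (Wᵀ *ᵥ fun a => U a i) := by
          simp only [← hrow, dotProduct, sq]
    _ ≤ (fun a => U a i) ⬝ᵥ (fun a => U a i) := dotProduct_transpose_mulVec_self_le hW he' _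
    _ = e i := by simpa [mul_apply, dotProduct] using congrFun (congrFun hU i) i
    _ ≤ 1 := he i

theorem sum_sq_transpose_mul_col_le_one {ι κ μ : Type*} [Fintype ι] [Fintype κ]
    [DecidableEq κ] [DecidableEq μ] {U : Matrix ι κ ℝ} {W : Matrix ι μ ℝ} {e : κ → ℝ}
    {e' : μ → ℝ} (hU : Uᵀ * U = diagonal e) (he : ∀ j, e j ≤ 1)
    (hW : Wᵀ * W = diagonal e') (he' : ∀ j, e' j ≤ 1) (j : μ) :
    ∑ i, (Uᵀ * W) i j ^ 2 ≤ 1 := by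
  have h := sum_sq_transpose_mul_row_le_one hW he' hU he j
  rwa [← transpose_transpose U, ← transpose_mul] at h

section Substochastic

open Finset

theorem sum_mul_le_sum_mul_of_sum_Iic_le : ∀ {n : ℕ} {τ c a : Fin n → ℝ}, Antitone τ →
    (∀ i, 0 ≤ τ i) → (∀ t, ∑ i ∈ Iic t, c i ≤ ∑ i ∈ Iic t, a i) →
    ∑ i, τ i * c i ≤ ∑ i, τ i * a i
  | 0, _, _, _, _, _, _ => by simp
  | n + 1, τ, c, a, hτ, hτ0, h => by
    -- Subtracting the last weight `t₀` leaves weights vanishing at `Fin.last n`.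
    set t₀ := τ (Fin.last n)
    have hsplit (b : Fin (n + 1) → ℝ) : ∑ i, τ i * b i =
        ∑ i : Fin n, (τ i.castSucc - t₀) * b i.castSucc + t₀ * ∑ i, b i := by
      have : ∑ i, τ i * b i = ∑ i, (τ i - t₀) * b i + t₀ * ∑ i, b i := by
        rw [mul_sum, ← sum_add_distrib]
        exact sum_congr rfl fun i _ => by ring
      rw [this, Fin.sum_univ_castSucc, sub_self, zero_mul, add_zero]
    have hlast : ∑ i, c i ≤ ∑ i, a i := by
      simpa [← Fin.top_eq_last, Iic_top] using h (Fin.last n)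
    rw [hsplit c, hsplit a]
    refine add_le_add (sum_mul_le_sum_mul_of_sum_Iic_le ?_ ?_ ?_)
      (mul_le_mul_of_nonneg_left hlast (hτ0 _))
    · exact fun i j hij => sub_le_sub_right (hτ (Fin.castSucc_le_castSucc_iff.mpr hij)) _
    · exact fun i => sub_nonneg.mpr (hτ (Fin.le_last _))
    · intro t
      simpa [← Fin.map_castSuccEmb_Iic] using h t.castSucc

theorem sum_mul_le_sum_Iic_of_sum_le {n : ℕ} {σ r : Fin n → ℝ} (hσ : Antitone σ)
    (hσ0 : ∀ i, 0 ≤ σ i) (hr0 : ∀ i, 0 ≤ r i) (hr1 : ∀ i, r i ≤ 1) (t : Fin n)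
    (hr : ∑ i, r i ≤ t + 1) : ∑ i, σ i * r i ≤ ∑ i ∈ Iic t, σ i := by
  -- termwise `(σ i - σ t) * (r i - [i ≤ t]) ≤ 0`
  have hterm (i : Fin n) : σ i * r i ≤ σ t * r i + if i ≤ t then σ i - σ t else 0 := by
    split_ifs with hi
    · nlinarith [hσ hi, hr1 i]
    · nlinarith [hσ (not_le.mp hi).le, hr0 i]
  calc ∑ i, σ i * r i ≤ ∑ i, (σ t * r i + if i ≤ t then σ i - σ t else 0) :=
        sum_le_sum fun i _ => hterm i
    _ = σ t * ∑ i, r i + ∑ i ∈ Iic t, (σ i - σ t) := by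
        rw [sum_add_distrib, mul_sum, ← sum_filter]
        congr 2
        ext; simp
    _ ≤ σ t * (t + 1) + ∑ i ∈ Iic t, (σ i - σ t) := by gcongr; exact hσ0 t
    _ = ∑ i ∈ Iic t, σ i := by
        rw [sum_sub_distrib, sum_const, Fin.card_Iic, nsmul_eq_mul]
        push_cast
        ring

theorem sum_sum_mul_mul_le_of_substochastic {n : ℕ} {σ τ : Fin n → ℝ}
    {S : Fin n → Fin n → ℝ} (hσ : Antitone σ) (hτ : Antitone τ) (hσ0 : ∀ i, 0 ≤ σ i)
    (hτ0 : ∀ i, 0 ≤ τ i) (hS0 : ∀ i j, 0 ≤ S i j) (hrow : ∀ i, ∑ j, S i j ≤ 1)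
    (hcol : ∀ j, ∑ i, S i j ≤ 1) :
    ∑ i, ∑ j, σ i * τ j * S i j ≤ ∑ i, σ i * τ i := by
  have hlhs : ∑ i, ∑ j, σ i * τ j * S i j = ∑ j, τ j * ∑ i, σ i * S i j := by
    rw [sum_comm]
    exact sum_congr rfl fun j _ => by rw [mul_sum]; exact sum_congr rfl fun i _ => by ring
  rw [hlhs, show ∑ i, σ i * τ i = ∑ j, τ j * σ j from sum_congr rfl fun j _ => mul_comm _ _]
  refine sum_mul_le_sum_mul_of_sum_Iic_le hτ hτ0 fun t => ?_
  have hswap : ∑ j ∈ Iic t, ∑ i, σ i * S i j = ∑ i, σ i * ∑ j ∈ Iic t, S i j := by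
    rw [sum_comm]; simp only [mul_sum]
  rw [hswap]
  refine sum_mul_le_sum_Iic_of_sum_le hσ hσ0 (fun i => sum_nonneg fun j _ => hS0 i j)
    (fun i => (sum_le_sum_of_subset_of_nonneg (subset_univ _) fun j _ _ => hS0 i j).trans
      (hrow i)) t ?_
  calc ∑ i, ∑ j ∈ Iic t, S i j = ∑ j ∈ Iic t, ∑ i, S i j := sum_comm
    _ ≤ ∑ j ∈ Iic t, (1 : ℝ) := sum_le_sum fun j _ => hcol j
    _ = t + 1 := by simp [Fin.card_Iic]

end Substochastic

theorem sum_sum_mul_mul_mul_le_of_sum_sq_le_one {n : ℕ} {σ τ : Fin n → ℝ}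
    {A B : Matrix (Fin n) (Fin n) ℝ} (hσ : Antitone σ) (hτ : Antitone τ)
    (hσ0 : ∀ i, 0 ≤ σ i) (hτ0 : ∀ i, 0 ≤ τ i)
    (hArow : ∀ i, ∑ j, A i j ^ 2 ≤ 1) (hAcol : ∀ j, ∑ i, A i j ^ 2 ≤ 1)
    (hBrow : ∀ i, ∑ j, B i j ^ 2 ≤ 1) (hBcol : ∀ j, ∑ i, B i j ^ 2 ≤ 1) :
    ∑ i, ∑ j, σ i * τ j * (A i j * B i j) ≤ ∑ i, σ i * τ i := by
  set S : Fin n → Fin n → ℝ := fun i j => (A i j ^ 2 + B i j ^ 2) / 2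
  calc ∑ i, ∑ j, σ i * τ j * (A i j * B i j) ≤ ∑ i, ∑ j, σ i * τ j * S i j := by
        gcongr with i _ j _
        · exact mul_nonneg (hσ0 i) (hτ0 j)
        · exact (le_div_iff₀ two_pos).mpr (by linarith [two_mul_le_add_sq (A i j) (B i j)])
    _ ≤ ∑ i, σ i * τ i := by
        refine sum_sum_mul_mul_le_of_substochastic hσ hτ hσ0 hτ0 (fun i j => by positivity)
          (fun i => ?_) (fun j => ?_)
        · simp only [S, ← Finset.sum_div, Finset.sum_add_distrib]
          linarith [hArow i, hBrow i]
        · simp only [S, ← Finset.sum_div, Finset.sum_add_distrib]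
          linarith [hAcol j, hBcol j]

section VonNeumann

variable {m n : ℕ}

theorem finner_mul_diagonal_mul_transpose {p : ℕ} (U₁ U₂ : Matrix (Fin m) (Fin p) ℝ)
    (V₁ V₂ : Matrix (Fin n) (Fin p) ℝ) (σ τ : Fin p → ℝ) :
    finner (U₁ * diagonal σ * V₁ᵀ) (U₂ * diagonal τ * V₂ᵀ) =
      ∑ i, ∑ j, σ i * τ j * ((U₁ᵀ * U₂) i j * (V₁ᵀ * V₂) i j) := by
  have htrace : ((U₁ * diagonal σ * V₁ᵀ)ᵀ * (U₂ * diagonal τ * V₂ᵀ)).trace =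
      (diagonal σ * (U₁ᵀ * U₂ * diagonal τ * (V₁ᵀ * V₂)ᵀ)).trace := by
    simp only [transpose_mul, transpose_transpose, diagonal_transpose, Matrix.mul_assoc]
    rw [trace_mul_comm]
    simp only [Matrix.mul_assoc]
  rw [finner_eq_trace, htrace]
  simp only [trace, diag_apply, diagonal_mul, mul_apply (M := U₁ᵀ * U₂ * diagonal τ),
    mul_diagonal, transpose_apply, Finset.mul_sum]
  exact Finset.sum_congr rfl fun i _ => Finset.sum_congr rfl fun j _ => by ring

theorem finner_le_sum_svals_mul_svals (X Y : Mat m n) :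
    finner X Y ≤ ∑ j, svals X j * svals Y j := by
  obtain ⟨U₁, V₁, e₁, hU₁, he₁, hV₁, hX⟩ := exists_svd X
  obtain ⟨U₂, V₂, e₂, hU₂, he₂, hV₂, hY⟩ := exists_svd Y
  rw [← diagonal_one] at hV₁ hV₂
  conv_lhs => rw [hX, hY, finner_mul_diagonal_mul_transpose]
  have hone : ∀ _ : Fin n, (1 : ℝ) ≤ 1 := fun _ => le_rfl
  exact sum_sum_mul_mul_mul_le_of_sum_sq_le_one (svals_antitone X) (svals_antitone Y)
    (svals_nonneg X) (svals_nonneg Y) (sum_sq_transpose_mul_row_le_one hU₁ he₁ hU₂ he₂)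
    (sum_sq_transpose_mul_col_le_one hU₁ he₁ hU₂ he₂)
    (sum_sq_transpose_mul_row_le_one hV₁ hone hV₂ hone)
    (sum_sq_transpose_mul_col_le_one hV₁ hone hV₂ hone)

theorem vnorm_svals_sub_le_fnorm_sub (X Y : Mat m n) :
    vnorm (svals X - svals Y) ≤ fnorm (X - Y) := by
  refine Real.sqrt_le_sqrt ?_
  have hsq (Z : Mat m n) : vinner (svals Z) (svals Z) = finner Z Z := by
    rw [← sum_sq_svals]; simp only [vinner, sq]
  rw [vinner_sub_self, finner_sub_self, hsq, hsq]
  linarith [finner_le_sum_svals_mul_svals X Y,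
    show vinner (svals X) (svals Y) = ∑ j, svals X j * svals Y j from rfl]

end VonNeumann

end Paper

theorem stmt4_general {m n : ℕ} (hmn : n ≤ m) (f : (Fin n → ℝ) → EReal)
    (habs : AbsSymFun f) (x : Fin n → ℝ) :
    vdist x {y | f y ≠ ⊤} = mdist (mdiag x) {X : Mat m n | f (svals X) ≠ ⊤} := by
  have hdiag (y : Fin n → ℝ) : f (svals (mdiag y : Mat m n)) = f y := by
    obtain ⟨P, hP, hPy⟩ := exists_isSignedPerm_mulVec_svals_mdiag hmn y
    rw [← habs P hP, hPy]
  obtain ⟨P, hP, hPx⟩ := exists_isSignedPerm_mulVec_svals_mdiag (m := m) hmn x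
  refine csInf_eq_csInf_of_forall_exists_le ?_ ?_
  · rintro _ ⟨y, hy, rfl⟩
    refine ⟨_, ⟨mdiag y, by simpa [hdiag] using hy, rfl⟩, ?_⟩
    show fnorm (mdiag x - mdiag y) ≤ vnorm (x - y)
    rw [← mdiag_sub, fnorm_mdiag hmn]
  · rintro _ ⟨Y, hY, rfl⟩
    refine ⟨_, ⟨P *ᵥ svals Y, by simpa [habs P hP] using hY, rfl⟩, ?_⟩
    calc vnorm (x - P *ᵥ svals Y) = vnorm (P *ᵥ (svals (mdiag x) - svals Y)) := by
          rw [mulVec_sub, hPx]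
      _ = vnorm (svals (mdiag x) - svals Y) := hP.vnorm_mulVec _
      _ ≤ fnorm (mdiag x - Y) := vnorm_svals_sub_le_fnorm_sub _ _

/-- For an orthogonally invariant matrix function `F = f ∘ σ` with `f` absolutely symmetric,
`dist(x, dom f) = dist(diag(x), dom F)` for every `x ∈ ℝⁿ`. -/
theorem stmt4 {m n : ℕ} (hmn : n ≤ m) (f : (Fin n → ℝ) → EReal)
    (habs : AbsSymFun f) (hbot : ∀ x, f x ≠ ⊥) (x : Fin n → ℝ) :
    vdist x {y | f y ≠ ⊤} = mdist (mdiag x) {X : Mat m n | f (svals X) ≠ ⊤} :=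
  stmt4_general hmn f habs x
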